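/- arXiv:1702.05859 — 3 statements merged into one kernel-verified Lean document; each statement's English description precedes it below -/
import Mathlib

section
/- Fix points x₁,…,x_M ∈ ℝ^m and a multi-index α with |α| ≤ p. For U ∈ ℝ^{m×n} define the matrix V(U) ∈ ℝ^{M×N} with entries V(U)_{i,q} = ∏_{s=1}^n (Uᵀ x_i)_s^{(α_q)_s} over an enumeration {α_q} of all multi-indices of total degree ≤ p. For indices j ∈ {1,…,n}, k ∈ {1,…,n}, define W^{(j,k)} ∈ ℝ^{M×N} by W^{(j,k)}_{r,q} = (α_q)_k (Uᵀ x_r)_k^{(α_q)_k − 1} (Uᵀ x_r)_j ∏_{s≠k} (Uᵀ x_r)_s^{(α_q)_s}. Then every column of W^{(j,k)} lies in the range of V(U). -/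
/-- Columns of the matrix `W^{(j,k)}` (obtained from the Vandermonde-like matrix
`V(U)` by differentiating each monomial in coordinate `k` and multiplying by the
`j`-th coordinate) lie in the range of `V(U)`. -/
theorem W_columns_in_range_V (m n p M N : ℕ)
    (x : Fin M → Fin m → ℝ) (U : Matrix (Fin m) (Fin n) ℝ)
    (α : Fin N → Fin n → ℕ)
    (hdeg : ∀ q, ∑ s, α q s ≤ p)
    (hsurj : ∀ β : Fin n → ℕ, (∑ s, β s ≤ p) → ∃ q, α q = β)
    (V : Matrix (Fin M) (Fin N) ℝ)
    (hV : ∀ i q, V i q = ∏ s, (U.transpose.mulVec (x i)) s ^ (α q s))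
    (j k : Fin n) :
    ∀ q : Fin N,
      (fun r : Fin M =>
          (α q k : ℝ) * (U.transpose.mulVec (x r)) k ^ (α q k - 1) *
            (U.transpose.mulVec (x r)) j *
            ∏ s ∈ Finset.univ.erase k, (U.transpose.mulVec (x r)) s ^ (α q s)) ∈
        LinearMap.range V.mulVecLin := by
  intro q
  by_cases h0 : α q k = 0
  · refine ⟨0, ?_⟩
    funext r
    simp [h0]
  · -- define the new multi-index β
    set β : Fin n → ℕ :=
      fun s => (if s = k then α q s - 1 else α q s) + (if s = j then 1 else 0) with hβ
    have hsum : ∑ s, β s ≤ p := by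
      have h1 : (∑ s, (if s = k then α q s - 1 else α q s)) + 1
          = ∑ s, α q s := by
        rw [← Finset.sum_erase_add _ _ (Finset.mem_univ k),
          ← Finset.sum_erase_add _ (α q) (Finset.mem_univ k)]
        have he : ∑ s ∈ Finset.univ.erase k, (if s = k then α q s - 1 else α q s)
            = ∑ s ∈ Finset.univ.erase k, α q s :=
          Finset.sum_congr rfl (fun s hs => if_neg (Finset.ne_of_mem_erase hs))
        rw [he, if_pos rfl]
        omega
      have h2 : ∑ s, (if s = j then 1 else 0) = 1 := by simp
      have h3 : 1 ≤ ∑ s, α q s := by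
        calc 1 ≤ α q k := Nat.one_le_iff_ne_zero.2 h0
        _ ≤ ∑ s, α q s := Finset.single_le_sum (fun s _ => Nat.zero_le _) (Finset.mem_univ k)
      rw [hβ, Finset.sum_add_distrib, h2]
      have := hdeg q
      omega
    obtain ⟨q', hq'⟩ := hsurj β hsum
    refine ⟨(α q k : ℝ) • (Pi.single q' 1 : Fin N → ℝ), ?_⟩
    funext r
    have hmv : V.mulVecLin ((α q k : ℝ) • (Pi.single q' 1 : Fin N → ℝ)) r = (α q k : ℝ) * V r q' := by
      simp [Matrix.mulVecLin, Matrix.mulVec, dotProduct, Pi.single_apply,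
        mul_ite, Finset.sum_ite_eq', mul_comm]
    rw [hmv, hV, hq']
    set y := U.transpose.mulVec (x r) with hy
    have : ∏ s, y s ^ β s
        = (y k ^ (α q k - 1) * ∏ s ∈ Finset.univ.erase k, y s ^ (α q s)) * y j := by
      rw [hβ]
      simp only [pow_add]
      rw [Finset.prod_mul_distrib]
      congr 1
      · rw [← Finset.mul_prod_erase _ _ (Finset.mem_univ k)]
        simp only [if_pos rfl]
        congr 1
        exact Finset.prod_congr rfl (fun s hs => by
          simp [Finset.ne_of_mem_erase hs])
      · simp
    rw [this]
    ring
end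

section
/- Let U ∈ ℝ^{m×n} have orthonormal columns and let Δ ∈ ℝ^{m×n} satisfy Uᵀ Δ = 0. Write the thin singular value decomposition Δ = Y Σ Zᵀ with Y ∈ ℝ^{m×n} having orthonormal columns, Σ diagonal, Z ∈ ℝ^{n×n} orthogonal. Then for every t ∈ ℝ, the matrix U(t) = U Z cos(Σ t) Zᵀ + Y sin(Σ t) Zᵀ has orthonormal columns: U(t)ᵀ U(t) = I. -/
/-- Points on the Grassmann geodesic
`U(t) = U Z cos(Σt) Zᵀ + Y sin(Σt) Zᵀ` (Edelman–Arias–Smith) have orthonormal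
columns, where `Δ = Y Σ Zᵀ` is a thin SVD of a tangent direction `Δ` with
`Uᵀ Δ = 0`. -/
theorem grassmann_geodesic_orthonormal (m n : ℕ)
    (U Y : Matrix (Fin m) (Fin n) ℝ) (σ : Fin n → ℝ)
    (Z : Matrix (Fin n) (Fin n) ℝ)
    (hU : U.transpose * U = 1) (hY : Y.transpose * Y = 1)
    (hZ1 : Z.transpose * Z = 1) (hZ2 : Z * Z.transpose = 1)
    (hΔ : U.transpose * (Y * Matrix.diagonal σ * Z.transpose) = 0)
    (t : ℝ) :
    (U * Z * Matrix.diagonal (fun i => Real.cos (σ i * t)) * Z.transpose +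
          Y * Matrix.diagonal (fun i => Real.sin (σ i * t)) * Z.transpose).transpose *
        (U * Z * Matrix.diagonal (fun i => Real.cos (σ i * t)) * Z.transpose +
          Y * Matrix.diagonal (fun i => Real.sin (σ i * t)) * Z.transpose) = 1 := by
  set C : Matrix (Fin n) (Fin n) ℝ :=
    Matrix.diagonal (fun i => Real.cos (σ i * t)) with hC
  set S : Matrix (Fin n) (Fin n) ℝ :=
    Matrix.diagonal (fun i => Real.sin (σ i * t)) with hS
  have hM : U.transpose * Y * Matrix.diagonal σ = 0 := by
    have h := congrArg (· * Z) hΔ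
    simp only [Matrix.mul_assoc, Matrix.zero_mul, hZ1, Matrix.mul_one] at h
    simpa [Matrix.mul_assoc] using h
  have hMS : U.transpose * Y * S = 0 := by
    ext i j
    have h := congrFun (congrFun hM i) j
    simp only [Matrix.mul_diagonal, Matrix.zero_apply] at h
    simp only [hS, Matrix.mul_diagonal, Matrix.zero_apply]
    rcases mul_eq_zero.mp h with h' | h'
    · rw [h', zero_mul]
    · rw [h', zero_mul, Real.sin_zero, mul_zero]
  have hSM : S * (Y.transpose * U) = 0 := by
    have h := congrArg Matrix.transpose hMS
    simpa [Matrix.transpose_mul, Matrix.mul_assoc, hS] using h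
  have cUU : ∀ X : Matrix (Fin n) (Fin n) ℝ, U.transpose * (U * X) = X := by
    intro X; rw [← Matrix.mul_assoc, hU, Matrix.one_mul]
  have cYY : ∀ X : Matrix (Fin n) (Fin n) ℝ, Y.transpose * (Y * X) = X := by
    intro X; rw [← Matrix.mul_assoc, hY, Matrix.one_mul]
  have cZtZ : ∀ X : Matrix (Fin n) (Fin n) ℝ, Z.transpose * (Z * X) = X := by
    intro X; rw [← Matrix.mul_assoc, hZ1, Matrix.one_mul]
  have cUY : ∀ X : Matrix (Fin n) (Fin n) ℝ, U.transpose * (Y * (S * X)) = 0 := by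
    intro X
    calc U.transpose * (Y * (S * X)) = (U.transpose * Y * S) * X := by
          simp [Matrix.mul_assoc]
      _ = 0 := by rw [hMS, Matrix.zero_mul]
  have cYU : ∀ X : Matrix (Fin n) (Fin n) ℝ, S * (Y.transpose * (U * X)) = 0 := by
    intro X
    calc S * (Y.transpose * (U * X)) = (S * (Y.transpose * U)) * X := by
          simp [Matrix.mul_assoc]
      _ = 0 := by rw [hSM, Matrix.zero_mul]
  have hCS : C * C + S * S = 1 := by
    rw [hC, hS, Matrix.diagonal_mul_diagonal, Matrix.diagonal_mul_diagonal,
      Matrix.diagonal_add]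
    rw [show (1 : Matrix (Fin n) (Fin n) ℝ) = Matrix.diagonal (fun _ => 1) from
      (Matrix.diagonal_one).symm]
    have hfun : (fun i => Real.cos (σ i * t) * Real.cos (σ i * t) +
        Real.sin (σ i * t) * Real.sin (σ i * t)) = fun _ : Fin n => (1 : ℝ) := by
      funext i
      linear_combination Real.cos_sq_add_sin_sq (σ i * t)
    rw [hfun]
  have hCt : C.transpose = C := by rw [hC, Matrix.diagonal_transpose]
  have hSt : S.transpose = S := by rw [hS, Matrix.diagonal_transpose]
  simp only [Matrix.transpose_add, Matrix.transpose_mul, Matrix.transpose_transpose,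
    hCt, hSt, Matrix.add_mul, Matrix.mul_add, Matrix.mul_assoc,
    cUU, cYY, cZtZ, cUY, cYU, Matrix.mul_zero, add_zero, zero_add]
  calc Z * (C * (C * Z.transpose)) + Z * (S * (S * Z.transpose))
      = Z * ((C * C + S * S) * Z.transpose) := by
        simp [Matrix.add_mul, Matrix.mul_add, Matrix.mul_assoc]
    _ = 1 := by rw [hCS, Matrix.one_mul, hZ2]
end

section
/- Let V : ℝ^{m×n} → ℝ^{M×N} be differentiable at U and suppose V(U) has full column rank, with P⊥(U) = I − V(U)V(U)⁺. Then for each entry (j,k), the derivative of the residual r(U) = P⊥(U) f in the direction of U_{jk} is ∂r/∂U_{jk} = −[ P⊥ (∂V/∂U_{jk}) V⁺ + (P⊥ (∂V/∂U_{jk}) V⁺)ᵀ ] f, evaluated at U. -/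
/-!
With `G = (VᵀV)⁻¹` we have `V⁺ = G Vᵀ`, and `V⁺ᵀ = V G` because `G` is symmetric. The product rule
and `d(A⁻¹) = -A⁻¹ dA A⁻¹` give `dV⁺ = -G (dVᵀ V + Vᵀ dV) V⁺ + G dVᵀ`, hence
`d(V V⁺) = (dV V⁺ - V V⁺ dV V⁺) + (V⁺ᵀ dVᵀ - V⁺ᵀ dVᵀ V V⁺) = P⊥ dV V⁺ + (P⊥ dV V⁺)ᵀ`.
-/

open Matrix

namespace Matrix

open scoped Norms.Elementwise

variable {𝕜 : Type*} [NontriviallyNormedField 𝕜] {l m n : Type*} {x : 𝕜}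

theorem hasDerivAt_iff_forall_entry [Fintype m] [Fintype n] {F : 𝕜 → Matrix m n 𝕜}
    {F' : Matrix m n 𝕜} :
    HasDerivAt F F' x ↔ ∀ i j, HasDerivAt (fun t => F t i j) (F' i j) x :=
  hasDerivAt_pi.trans (forall_congr' fun _ => hasDerivAt_pi)

theorem _root_.HasDerivAt.matrix_transpose [Fintype m] [Fintype n] {F : 𝕜 → Matrix m n 𝕜}
    {F' : Matrix m n 𝕜} (h : HasDerivAt F F' x) : HasDerivAt (fun t => (F t)ᵀ) F'ᵀ x :=
  hasDerivAt_iff_forall_entry.2 fun i j => hasDerivAt_iff_forall_entry.1 h j i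

theorem _root_.HasDerivAt.matrix_mul [Fintype l] [Fintype m] [Fintype n]
    {F : 𝕜 → Matrix l m 𝕜} {F' : Matrix l m 𝕜} {G : 𝕜 → Matrix m n 𝕜} {G' : Matrix m n 𝕜}
    (hF : HasDerivAt F F' x) (hG : HasDerivAt G G' x) :
    HasDerivAt (fun t => F t * G t) (F' * G x + F x * G') x := by
  refine hasDerivAt_iff_forall_entry.2 fun i j => ?_
  simp only [mul_apply, add_apply, ← Finset.sum_add_distrib]
  exact HasDerivAt.fun_sum fun p _ =>
    (hasDerivAt_iff_forall_entry.1 hF i p).mul (hasDerivAt_iff_forall_entry.1 hG p j)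

theorem _root_.HasDerivAt.matrix_mulVec_const [Fintype m] [Fintype n] {F : 𝕜 → Matrix m n 𝕜}
    {F' : Matrix m n 𝕜} (h : HasDerivAt F F' x) (v : n → 𝕜) :
    HasDerivAt (fun t => F t *ᵥ v) (F' *ᵥ v) x := by
  refine hasDerivAt_pi.2 fun i => ?_
  simp only [mulVec, dotProduct]
  exact HasDerivAt.fun_sum fun p _ => (hasDerivAt_iff_forall_entry.1 h i p).mul_const (v p)

theorem _root_.HasDerivAt.matrix_inv [CompleteSpace 𝕜] [Fintype n] [DecidableEq n]
    {F : 𝕜 → Matrix n n 𝕜} {F' : Matrix n n 𝕜} (h : HasDerivAt F F' x) (hF : IsUnit (F x)) :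
    HasDerivAt (fun t => (F t)⁻¹) (-((F x)⁻¹ * F' * (F x)⁻¹)) x := by
  -- The operator norm makes square matrices a complete normed algebra, where inversion is
  -- differentiable; its uniformity is definitionally the product one.
  let _ : NormedRing (Matrix n n 𝕜) := Matrix.linftyOpNormedRing
  let _ : NormedAlgebra 𝕜 (Matrix n n 𝕜) := Matrix.linftyOpNormedAlgebra
  have : HasSummableGeomSeries (Matrix n n 𝕜) :=
    @instHasSummableGeomSeriesOfCompleteSpace _ _ (instCompleteSpace n n 𝕜)
  have hinv := hasFDerivAt_ringInverse (𝕜 := 𝕜) hF.unit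
  rw [← Ring.inverse_unit, hF.unit_spec] at hinv
  have hd := hinv.comp_hasDerivAt x h
  simp only [_root_.neg_apply, ContinuousLinearMap.mulLeftRight_apply] at hd
  simp only [nonsing_inv_eq_ringInverse]
  exact hd

/-- `A⁺ = (Aᵀ A)⁻¹ Aᵀ`, the Moore–Penrose pseudoinverse when `A` is real of full column rank
(otherwise the inverse is Mathlib's junk value). -/
noncomputable def leftPseudoinverse [Fintype m] [Fintype n] [DecidableEq n] (A : Matrix m n 𝕜) :
    Matrix n m 𝕜 :=
  (Aᵀ * A)⁻¹ * Aᵀ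

theorem transpose_inv_transpose_mul_self [Fintype m] [Fintype n] [DecidableEq n]
    (A : Matrix m n 𝕜) : ((Aᵀ * A)⁻¹)ᵀ = (Aᵀ * A)⁻¹ := by
  rw [transpose_nonsing_inv, transpose_mul, transpose_transpose]

theorem mul_leftPseudoinverse_deriv_eq [Fintype m] [Fintype n] [DecidableEq m] [DecidableEq n]
    (B B' : Matrix m n 𝕜) :
    B' * B.leftPseudoinverse +
        B * (-((Bᵀ * B)⁻¹ * (B'ᵀ * B + Bᵀ * B') * (Bᵀ * B)⁻¹) * Bᵀ + (Bᵀ * B)⁻¹ * B'ᵀ) =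
      (1 - B * B.leftPseudoinverse) * B' * B.leftPseudoinverse +
        ((1 - B * B.leftPseudoinverse) * B' * B.leftPseudoinverse)ᵀ := by
  simp only [leftPseudoinverse, Matrix.sub_mul, Matrix.add_mul, Matrix.mul_add, Matrix.one_mul,
    Matrix.neg_mul, Matrix.mul_neg, transpose_sub, transpose_mul,
    transpose_transpose, transpose_inv_transpose_mul_self, Matrix.mul_assoc]
  abel

theorem _root_.HasDerivAt.one_sub_mul_leftPseudoinverse [CompleteSpace 𝕜] [Fintype m] [Fintype n]
    [DecidableEq m] [DecidableEq n] {F : 𝕜 → Matrix m n 𝕜} {F' : Matrix m n 𝕜}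
    (h : HasDerivAt F F' x) (hF : IsUnit ((F x)ᵀ * F x)) :
    let P := 1 - F x * (F x).leftPseudoinverse
    HasDerivAt (fun t => 1 - F t * (F t).leftPseudoinverse)
      (-(P * F' * (F x).leftPseudoinverse + (P * F' * (F x).leftPseudoinverse)ᵀ)) x := by
  intro P
  have hGram := (h.matrix_transpose.matrix_mul h).matrix_inv hF
  have hProj := h.matrix_mul (hGram.matrix_mul h.matrix_transpose)
  rw [← mul_leftPseudoinverse_deriv_eq]
  exact hProj.const_sub 1

end Matrix

/-- Golub–Pereyra variable projection derivative formula: for full column rank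
`V(U)` (where `V⁺ = (VᵀV)⁻¹Vᵀ`), the derivative of the residual
`r(U) = (I − V V⁺) f` with respect to the entry `U_{jk}` is
`−[P⊥ (∂V/∂U_{jk}) V⁺ + (P⊥ (∂V/∂U_{jk}) V⁺)ᵀ] f`. -/
theorem varpro_derivative (m n M N : ℕ)
    (V : Matrix (Fin m) (Fin n) ℝ → Matrix (Fin M) (Fin N) ℝ)
    (U : Matrix (Fin m) (Fin n) ℝ) (j : Fin m) (k : Fin n)
    (V' : Matrix (Fin M) (Fin N) ℝ)
    (hV' : ∀ (i : Fin M) (l : Fin N),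
      HasDerivAt (fun t : ℝ => V (U + t • Matrix.single j k 1) i l)
        (V' i l) 0)
    (hrank : IsUnit ((V U).transpose * V U))
    (f : Fin M → ℝ) :
    let pinv : Matrix (Fin M) (Fin N) ℝ → Matrix (Fin N) (Fin M) ℝ :=
      fun A => (A.transpose * A)⁻¹ * A.transpose
    let Pperp : Matrix (Fin M) (Fin M) ℝ := 1 - V U * pinv (V U)
    ∀ i : Fin M,
      HasDerivAt
        (fun t : ℝ =>
          (((1 - V (U + t • Matrix.single j k 1) *
                pinv (V (U + t • Matrix.single j k 1))).mulVec f) i))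
        ((-((Pperp * V' * pinv (V U) +
              (Pperp * V' * pinv (V U)).transpose).mulVec f)) i) 0 := by
  intro pinv Pperp i
  have hV : HasDerivAt (fun t : ℝ => V (U + t • single j k 1)) V' 0 :=
    hasDerivAt_iff_forall_entry.2 hV'
  have hP := hV.one_sub_mul_leftPseudoinverse (by simpa using hrank)
  rw [zero_smul, add_zero] at hP
  rw [← neg_mulVec]
  exact hasDerivAt_pi.1 (hP.matrix_mulVec_const f) i
end
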